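/- arXiv:math/0105170 — 2 statements merged into one kernel-verified Lean document; each statement's English description precedes it below -/
import Mathlib

section
/- Let q be a transcendental element over ℚ (work in the field ℚ(q)). Define elements b_n of ℚ(q) for n ∈ ℤ by b_{2i} = (1-q+q²)⁻¹ · (1-q) · ((-q)^{-i} - q^{2i}(q+q^{-1})) and b_{2i+1} = (1-q+q²)⁻¹ · ((-q)^{-i} + q^{2i+1}(q-1)) for i ∈ ℤ. Then for all n ∈ ℤ, b_{-n} = -q^{-1} · σ(b_n), where σ is the ℚ-algebra automorphism of ℚ(q) sending q to q^{-1}. -/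
local notation "q" => (RatFunc.X : RatFunc ℚ)

/-!
Since `σ` inverts `q`, it fixes `1 - q + q²` up to the factor `q⁻²` and exchanges the powers
`(-q)^(-i) ↔ (-q)^i` and `q^k ↔ q^(-k)`; so `σ` turns the formula for `b n` into that for
`b (-n)` up to the factor `-q`.
-/

section

variable {K : Type*} [Field K] {σ : K →+* K} {x : K}

theorem RingHom.map_zpow_of_map_eq_inv (hσ : σ x = x⁻¹) (k : ℤ) : σ (x ^ k) = x ^ (-k) := by
  rw [map_zpow₀, hσ, inv_zpow']

theorem RingHom.map_neg_of_map_eq_inv (hσ : σ x = x⁻¹) : σ (-x) = (-x)⁻¹ := by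
  rw [map_neg, hσ, inv_neg]

theorem RingHom.map_one_sub_add_sq_of_map_eq_inv (hx : x ≠ 0) (hσ : σ x = x⁻¹) :
    σ (1 - x + x ^ 2) = (x ^ 2)⁻¹ * (1 - x + x ^ 2) := by
  rw [map_add, map_sub, map_one, map_pow, hσ]
  field_simp
  ring

theorem apply_neg_eq_neg_inv_mul_map_apply (hx : x ≠ 0) (hσ : σ x = x⁻¹) (b : ℤ → K)
    (hbe : ∀ i : ℤ, b (2 * i) =
      (1 - x + x ^ 2)⁻¹ * (1 - x) * ((-x) ^ (-i) - x ^ (2 * i) * (x + x⁻¹)))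
    (hbo : ∀ i : ℤ, b (2 * i + 1) =
      (1 - x + x ^ 2)⁻¹ * ((-x) ^ (-i) + x ^ (2 * i + 1) * (x - 1))) (n : ℤ) :
    b (-n) = -x⁻¹ * σ (b n) := by
  have hnx : σ (-x) = (-x)⁻¹ := σ.map_neg_of_map_eq_inv hσ
  obtain ⟨k, rfl | rfl⟩ := Int.even_or_odd' n
  · rw [show -(2 * k) = 2 * -k by ring, hbe, hbe]
    simp only [map_mul, map_sub, map_add, map_inv₀, map_one, hσ,
      σ.map_one_sub_add_sq_of_map_eq_inv hx hσ, σ.map_zpow_of_map_eq_inv hσ,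
      σ.map_zpow_of_map_eq_inv hnx, mul_inv, inv_inv, neg_neg, mul_neg, zpow_neg]
    generalize (1 - x + x ^ 2)⁻¹ = y
    field_simp
    ring
  · rw [show -(2 * k + 1) = 2 * -(k + 1) + 1 by ring, hbo, hbo, neg_neg,
      show 2 * -(k + 1) + 1 = -(2 * k + 1) by ring, zpow_add_one₀ (neg_ne_zero.mpr hx)]
    simp only [map_mul, map_sub, map_add, map_inv₀, map_one, hσ,
      σ.map_one_sub_add_sq_of_map_eq_inv hx hσ, σ.map_zpow_of_map_eq_inv hσ,
      σ.map_zpow_of_map_eq_inv hnx, mul_inv, inv_inv, zpow_neg]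
    generalize (1 - x + x ^ 2)⁻¹ = y
    have hv : x ^ (2 * k + 1) ≠ 0 := zpow_ne_zero _ hx
    generalize x ^ (2 * k + 1) = v at hv ⊢
    field_simp
    ring

end

theorem stmt0 (b : ℤ → RatFunc ℚ)
    (hbe : ∀ i : ℤ, b (2 * i) =
      (1 - q + q ^ 2)⁻¹ * (1 - q) * ((-q) ^ (-i) - q ^ (2 * i) * (q + q⁻¹)))
    (hbo : ∀ i : ℤ, b (2 * i + 1) =
      (1 - q + q ^ 2)⁻¹ * ((-q) ^ (-i) + q ^ (2 * i + 1) * (q - 1)))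
    (σ : RatFunc ℚ ≃ₐ[ℚ] RatFunc ℚ) (hσ : σ q = q⁻¹) :
    ∀ n : ℤ, b (-n) = -q⁻¹ * σ (b n) :=
  apply_neg_eq_neg_inv_mul_map_apply (σ := (σ : RatFunc ℚ →+* RatFunc ℚ)) RatFunc.X_ne_zero hσ
    b hbe hbo
end

section
/- With b_n ∈ ℚ(q) as defined, for all s ∈ ℤ and all integers l ≥ 1 one has q·b_{2s} + (1+q)·∑_{i=1}^{l-1} b_{2i}·b_{2(i+s)} + (q+q^{-1})(q−1)·b_{2l−1}·b_{2(l+s)−1} = b_{2(2l+s−1)} (the middle sum being empty when l = 1). -/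
local notation "q" => (RatFunc.X : RatFunc ℚ)

/-!
With `P = (-q)^i` one has `(-q)^(-i) = P⁻¹` and `q^(2i) = P²`, so `b_{2i}` and `b_{2i+1}` are
Laurent polynomials in `P`. Increasing `l` by one adds `(1+q) b_{2l} b_{2(l+s)}` to the sum and
replaces the last product by `b_{2l+1} b_{2(l+s)+1}`; a direct computation in `(-q)^l` and
`(-q)^s` shows that this changes the left side by exactly `b_{2(2l+s+1)} - b_{2(2l+s-1)}`, so the
identity follows by induction from the case `l = 1`.
-/

section

variable {K : Type*} [Field K] (x : K)

-- `bEven x i` and `bOdd x i` are `b_{2i}` and `b_{2i+1}` with `q` specialised to `x`.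
def bEven (i : ℤ) : K :=
  (1 - x + x ^ 2)⁻¹ * (1 - x) * ((-x) ^ (-i) - x ^ (2 * i) * (x + x⁻¹))

def bOdd (i : ℤ) : K :=
  (1 - x + x ^ 2)⁻¹ * ((-x) ^ (-i) + x ^ (2 * i + 1) * (x - 1))

lemma zpow_two_mul_eq_sq_neg_zpow (i : ℤ) : x ^ (2 * i) = ((-x) ^ i) ^ 2 := by
  rw [← (even_two_mul i).neg_zpow, mul_comm, zpow_mul]; norm_cast

lemma bEven_eq (i : ℤ) : bEven x i =
    (1 - x + x ^ 2)⁻¹ * (1 - x) * (((-x) ^ i)⁻¹ - ((-x) ^ i) ^ 2 * (x + x⁻¹)) := by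
  rw [bEven, zpow_neg, zpow_two_mul_eq_sq_neg_zpow]

lemma bOdd_eq (hx : x ≠ 0) (i : ℤ) : bOdd x i =
    (1 - x + x ^ 2)⁻¹ * (((-x) ^ i)⁻¹ + x * ((-x) ^ i) ^ 2 * (x - 1)) := by
  rw [bOdd, zpow_neg, zpow_add_one₀ hx, zpow_two_mul_eq_sq_neg_zpow]; ring

variable {x}

lemma bOdd_zero (hx : x ≠ 0) (hc : 1 - x + x ^ 2 ≠ 0) : bOdd x 0 = 1 := by
  rw [bOdd_eq x hx]; field_simp; ring

lemma bEven_add_one (hx : x ≠ 0) (hc : 1 - x + x ^ 2 ≠ 0) (s : ℤ) :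
    x * bEven x s + (x + x⁻¹) * (x - 1) * bOdd x s = bEven x (s + 1) := by
  have hP : (-x) ^ s ≠ 0 := zpow_ne_zero _ (neg_ne_zero.mpr hx)
  rw [bEven_eq, bEven_eq, bOdd_eq x hx, zpow_add_one₀ (neg_ne_zero.mpr hx)]
  field_simp
  ring

lemma bEven_add_two_sub_bEven (hx : x ≠ 0) (hc : 1 - x + x ^ 2 ≠ 0) (s l : ℤ) :
    bEven x (2 * l + s + 1) - bEven x (2 * l + s - 1) =
      (1 + x) * (bEven x l * bEven x (l + s)) + (x + x⁻¹) * (x - 1) *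
        (bOdd x l * bOdd x (l + s) - bOdd x (l - 1) * bOdd x (l + s - 1)) := by
  have hx' : -x ≠ 0 := neg_ne_zero.mpr hx
  have hP : (-x) ^ s ≠ 0 := zpow_ne_zero _ hx'
  have hA : (-x) ^ l ≠ 0 := zpow_ne_zero _ hx'
  simp only [bEven_eq, bOdd_eq x hx, zpow_add₀ hx', zpow_sub₀ hx', zpow_mul', zpow_two, zpow_one]
  field_simp
  ring

lemma bEven_convolution (hx : x ≠ 0) (hc : 1 - x + x ^ 2 ≠ 0) (s : ℤ) {l : ℤ} (hl : 1 ≤ l) :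
    x * bEven x s + (1 + x) * ∑ i ∈ Finset.Icc 1 (l - 1), bEven x i * bEven x (i + s)
      + (x + x⁻¹) * (x - 1) * bOdd x (l - 1) * bOdd x (l + s - 1) = bEven x (2 * l + s - 1) := by
  induction l, hl using Int.leInduction with
  | base =>
    simp only [sub_self, Finset.Icc_eq_empty_of_lt zero_lt_one, Finset.sum_empty, mul_zero,
      add_zero, bOdd_zero hx hc, mul_one, add_sub_cancel_left]
    rw [show 2 + s - 1 = s + 1 by ring, bEven_add_one hx hc]
  | succ l hl ih =>
    have hIcc : Finset.Icc 1 l = insert l (Finset.Icc 1 (l - 1)) := by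
      rw [← Order.pred_eq_sub_one, Finset.insert_Icc_pred_right_eq_Icc hl]
    rw [add_sub_cancel_right, hIcc, Finset.sum_insert (by simp),
      show l + 1 + s - 1 = l + s by ring, show 2 * (l + 1) + s - 1 = 2 * l + s + 1 by ring]
    linear_combination ih - bEven_add_two_sub_bEven hx hc s l

end

lemma RatFunc.one_sub_X_add_X_sq_ne_zero {K : Type*} [Field K] :
    (1 - RatFunc.X + RatFunc.X ^ 2 : RatFunc K) ≠ 0 := by
  have h : (1 - Polynomial.X + Polynomial.X ^ 2 : Polynomial K) ≠ 0 := fun h => by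
    simpa [Polynomial.coeff_one, Polynomial.coeff_X] using congrArg (Polynomial.coeff · 2) h
  simpa using RatFunc.algebraMap_ne_zero h

theorem stmt8 (b : ℤ → RatFunc ℚ)
    (hbe : ∀ i : ℤ, b (2 * i) =
      (1 - q + q ^ 2)⁻¹ * (1 - q) * ((-q) ^ (-i) - q ^ (2 * i) * (q + q⁻¹)))
    (hbo : ∀ i : ℤ, b (2 * i + 1) =
      (1 - q + q ^ 2)⁻¹ * ((-q) ^ (-i) + q ^ (2 * i + 1) * (q - 1))) :
    ∀ s l : ℤ, 1 ≤ l →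
      q * b (2 * s) + (1 + q) * (∑ i ∈ Finset.Icc (1 : ℤ) (l - 1), b (2 * i) * b (2 * (i + s)))
        + (q + q⁻¹) * (q - 1) * b (2 * l - 1) * b (2 * (l + s) - 1) = b (2 * (2 * l + s - 1)) := by
  intro s l hl
  have hb_even (i : ℤ) : b (2 * i) = bEven q i := hbe i
  have hb_odd (i : ℤ) : b (2 * i - 1) = bOdd q (i - 1) := by
    rw [show 2 * i - 1 = 2 * (i - 1) + 1 by ring]; exact hbo _
  rw [hb_odd, hb_odd]
  simp only [hb_even]
  exact bEven_convolution RatFunc.X_ne_zero RatFunc.one_sub_X_add_X_sq_ne_zero s hl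
end
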